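/- Let γ ∈ V* be any linear form with s·γ ≠ γ. Then R is a free module over R^s with basis {1, γ}; that is, every polynomial f ∈ R can be written uniquely as f = g + γ·h with g, h ∈ R^s. -/
import Mathlib


open MvPolynomial

/-- The polynomial on `V = Fin n → ℝ` representing the linear form with coefficient
vector `g`, i.e. `v ↦ ∑ i, g i * v i`. -/
noncomputable def linForm (n : ℕ) (g : Fin n → ℝ) : MvPolynomial (Fin n) ℝ :=
  ∑ i, MvPolynomial.C (g i) * MvPolynomial.X i

/-- The algebra automorphism of `R = ℝ[X₁,…,Xₙ]` (polynomial functions on `V = Fin n → ℝ`)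
given by `(s·f)(v) = f (s v)` for the reflection `s(v) = v - ⟨α_s, v⟩ α_s^∨`, where the
linear form `α_s` has coefficient vector `a` and the vector `α_s^∨` has coordinates `c`. -/
noncomputable def reflAct (n : ℕ) (a c : Fin n → ℝ) :
    MvPolynomial (Fin n) ℝ →ₐ[ℝ] MvPolynomial (Fin n) ℝ :=
  MvPolynomial.aeval fun j => MvPolynomial.X j - MvPolynomial.C (c j) * linForm n a

/-- The subalgebra `Rˢ ⊆ R` of `s`-invariant polynomials. -/
noncomputable def invariants (n : ℕ) (a c : Fin n → ℝ) :
    Subalgebra ℝ (MvPolynomial (Fin n) ℝ) :=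
  AlgHom.equalizer (reflAct n a c) (AlgHom.id ℝ (MvPolynomial (Fin n) ℝ))

lemma reflAct_X (n : ℕ) (a c : Fin n → ℝ) (i : Fin n) :
    reflAct n a c (X i) = X i - C (c i) * linForm n a := by
  simp [reflAct]

lemma reflAct_linForm (n : ℕ) (a c g : Fin n → ℝ) :
    reflAct n a c (linForm n g)
      = linForm n g - C (∑ i, g i * c i) * linForm n a := by
  have h1 : reflAct n a c (linForm n g)
      = ∑ i, C (g i) * (X i - C (c i) * linForm n a) := by
    rw [show linForm n g = ∑ i, C (g i) * X i from rfl, map_sum]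
    exact Finset.sum_congr rfl fun i _ => by
      rw [map_mul, reflAct_X]; congr 1; simp [reflAct]
  rw [h1, show (C (∑ i, g i * c i) : MvPolynomial (Fin n) ℝ)
      = ∑ i, C (g i * c i) from map_sum C _ _, Finset.sum_mul,
    show linForm n g = ∑ i, C (g i) * X i from rfl,
    ← Finset.sum_sub_distrib]
  exact Finset.sum_congr rfl fun i _ => by rw [C_mul]; ring

lemma reflAct_dvd (n : ℕ) (a c : Fin n → ℝ) (f : MvPolynomial (Fin n) ℝ) :
    linForm n a ∣ (f - reflAct n a c f) := by
  induction f using MvPolynomial.induction_on with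
  | C r => simp [reflAct]
  | add p q hp hq =>
      have : p + q - reflAct n a c (p + q)
          = (p - reflAct n a c p) + (q - reflAct n a c q) := by rw [map_add]; ring
      rw [this]; exact dvd_add hp hq
  | mul_X p i hp =>
      have : p * X i - reflAct n a c (p * X i)
          = (p - reflAct n a c p) * X i + linForm n a * (reflAct n a c p * C (c i)) := by
        rw [map_mul, reflAct_X]; ring
      rw [this]
      exact dvd_add (Dvd.dvd.mul_right hp _) (Dvd.dvd.mul_right dvd_rfl _)

lemma reflAct_C (n : ℕ) (a c : Fin n → ℝ) (r : ℝ) :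
    reflAct n a c (C r) = C r := by simp [reflAct]

lemma reflAct_invol (n : ℕ) (a c : Fin n → ℝ) (hac : ∑ i, a i * c i = 2)
    (f : MvPolynomial (Fin n) ℝ) : reflAct n a c (reflAct n a c f) = f := by
  have hC2 : (C (2:ℝ) : MvPolynomial (Fin n) ℝ) = 2 := map_ofNat C 2
  have hα : reflAct n a c (linForm n a) = - linForm n a := by
    rw [reflAct_linForm, hac, hC2]; ring
  have key : (reflAct n a c).comp (reflAct n a c) = AlgHom.id ℝ _ := by
    apply MvPolynomial.algHom_ext; intro i
    rw [AlgHom.comp_apply, reflAct_X, map_sub, map_mul, reflAct_X, reflAct_C, hα,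
      AlgHom.id_apply]
    ring
  calc reflAct n a c (reflAct n a c f) = ((reflAct n a c).comp (reflAct n a c)) f := rfl
    _ = f := by rw [key]; rfl

/-- If `γ` is a linear form with `s·γ ≠ γ`, then `R` is free over `Rˢ` with basis `{1, γ}`:
every polynomial `f` can be written uniquely as `f = g + γ·h` with `g, h ∈ Rˢ`. -/
theorem free_basis_one_gamma (n : ℕ) (a c : Fin n → ℝ)
    (hac : ∑ i, a i * c i = 2)
    (g : Fin n → ℝ) (hg : reflAct n a c (linForm n g) ≠ linForm n g) :
    ∀ f : MvPolynomial (Fin n) ℝ,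
      ∃! p : MvPolynomial (Fin n) ℝ × MvPolynomial (Fin n) ℝ,
        p.1 ∈ invariants n a c ∧ p.2 ∈ invariants n a c ∧
          f = p.1 + linForm n g * p.2 := by

  intro f
  set α := linForm n a with hαdef
  set γ := linForm n g with hγdef
  set k : ℝ := ∑ i, g i * c i with hkdef
  have hsγ : reflAct n a c γ = γ - C k * α := reflAct_linForm n a c g
  have hCkα : C k * α ≠ 0 := by
    intro h; apply hg; rw [hsγ, h, sub_zero]
  have hk : k ≠ 0 := by
    intro h; apply hCkα; rw [h, map_zero, zero_mul]
  have hα0 : α ≠ 0 := by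
    intro h; apply hCkα; rw [h, mul_zero]
  obtain ⟨q, hq⟩ := reflAct_dvd n a c f
  -- q is invariant
  have hsq : reflAct n a c q = q := by
    have h1 : reflAct n a c (f - reflAct n a c f) = -(α * q) := by
      rw [map_sub, reflAct_invol n a c hac, ← hq]; ring
    have h2 : reflAct n a c (f - reflAct n a c f)
        = reflAct n a c α * reflAct n a c q := by rw [hq, map_mul]
    have hsα : reflAct n a c α = - α := by
      have hC2 : (C (2:ℝ) : MvPolynomial (Fin n) ℝ) = 2 := map_ofNat C 2
      rw [hαdef, reflAct_linForm, hac, hC2]; ring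
    have : α * reflAct n a c q = α * q := by
      have := h1.symm.trans h2
      rw [hsα] at this
      linear_combination this
    exact mul_left_cancel₀ hα0 this
  set h : MvPolynomial (Fin n) ℝ := C k⁻¹ * q with hhdef
  have hsh : reflAct n a c h = h := by rw [hhdef, map_mul, reflAct_C, hsq]
  have hCkh : C k * α * h = f - reflAct n a c f := by
    rw [hhdef, hq, show C k * α * (C k⁻¹ * q) = (C k * C k⁻¹) * (α * q) by ring,
      ← C_mul, mul_inv_cancel₀ hk, C_1, one_mul]
  set G : MvPolynomial (Fin n) ℝ := f - γ * h with hGdef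
  have hsG : reflAct n a c G = G := by
    rw [hGdef, map_sub, map_mul, hsγ, hsh]
    linear_combination hCkh
  refine ⟨(G, h), ⟨hsG, hsh, by rw [hGdef]; ring⟩, ?_⟩
  rintro ⟨G', h'⟩ ⟨hG', hh', heq⟩
  have hG'' : reflAct n a c G' = G' := hG'
  have hh'' : reflAct n a c h' = h' := hh'
  have heq2 : G' + γ * h' = G + γ * h := by rw [← heq, hGdef]; ring
  have heqs : G' + (γ - C k * α) * h' = G + (γ - C k * α) * h := by
    have := congrArg (reflAct n a c) heq2
    rwa [map_add, map_add, map_mul, map_mul, hsγ, hG'', hh'', hsG, hsh] at this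
  have hhh : C k * α * h' = C k * α * h := by linear_combination heq2 - heqs
  have hh'eq : h' = h := mul_left_cancel₀ hCkα hhh
  have hG'eq : G' = G := by
    have := heq2; rw [hh'eq] at this; exact add_right_cancel this
  exact Prod.ext hG'eq hh'eq
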